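/- arXiv:math/0506137 — 2 statements merged into one kernel-verified Lean document; each statement's English description precedes it below -/
import Mathlib

section
/- Suppose M has unique left inverses and A is a DTSM deterministic M-automaton over X accepting the normal subgroup Q ⊆ F. Let J ⊆ X* be the set of words w such that (m, w) labels a path in A from some terminal state to some terminal state for some m ∈ M, and let K = { w̄Q : w ∈ J } ⊆ F/Q. Then there is a well-defined injective group homomorphism σ : K → G(M) given by setting σ(w̄Q), for w ∈ J, to be the unique g ∈ M such that (g, w) labels a path in A between terminal states; in particular each such g lies in the group of units G(M). -/
/-- A monoid `M` has *unique left inverses* if whenever `b * a = 1 = c * a` we have `b = c`. -/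
def UniqueLeftInverses (M : Type) [Monoid M] : Prop :=
  ∀ a b c : M, b * a = 1 → c * a = 1 → b = c

/-- The word problem of a group `H`, generated as a monoid by the image of `φ : X → H`,
is the set of words over `X` representing the identity of `H`. -/
def wordProblem {H : Type} [Group H] {X : Type} (φ : X → H) : Set (List X) :=
  {w | (w.map φ).prod = 1}

/-- A deterministic `M`-automaton over the alphabet `X`: a finite directed graph with
a distinguished initial state, a set of terminal states, and edges labelled by pairs in
`M × X`, such that each state has at most one outgoing edge per letter of `X`. -/
structure DetMAutomaton (M : Type) [Monoid M] (X : Type) where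
  State : Type
  [stateFintype : Fintype State]
  init : State
  terminal : Set State
  edge : State → M × X → State → Prop
  det : ∀ ⦃p : State⦄ ⦃x : X⦄ ⦃g h : M⦄ ⦃q r : State⦄,
      edge p (g, x) q → edge p (h, x) r → g = h ∧ q = r

namespace DetMAutomaton

variable {M : Type} [Monoid M] {X : Type}

/-- `A.Path p m w q` means there is a path from `p` to `q` labelled `(m, w)`: the
`X`-components of its edge labels spell out `w` in order, and the `M`-components
multiply in order to `m`. -/
inductive Path (A : DetMAutomaton M X) : A.State → M → List X → A.State → Prop
  | nil (p : A.State) : Path A p 1 [] p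
  | cons {p q r : A.State} {g h : M} {x : X} {w : List X} :
      A.edge p (g, x) q → Path A q h w r → Path A p (g * h) (x :: w) r

/-- The language accepted by a deterministic `M`-automaton: all words `w` such that some
path labelled `(1, w)` leads from the initial state to a terminal state. -/
def Lang (A : DetMAutomaton M X) : Set (List X) :=
  {w | ∃ q ∈ A.terminal, A.Path A.init 1 w q}

/-- A deterministic `M`-automaton is *deterministic terminal state minimal* (DTSM) if no
deterministic `M`-automaton accepting the same language has strictly fewer terminal states. -/
def DTSM (A : DetMAutomaton M X) : Prop :=
  ∀ B : DetMAutomaton M X, B.Lang = A.Lang → Nat.card A.terminal ≤ Nat.card B.terminal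

end DetMAutomaton

/-!
Minimality forces every terminal state to be reached from the initial state along a path
labelled `(1, u)`; applied to the automaton restarted at a terminal state, it also forces every
terminal state to reach every other one along such a path. By determinism, the automaton
restarted at any terminal state therefore still accepts exactly the words representing elements
of `Q`, so a path between terminal states reading a word of `Q` is labelled `1`.

If `(g, w)` labels a path between terminal states and `v` represents `w̄⁻¹`, continuing along `v`
yields a right inverse `h` of `g`, and continuing along `w` once more a right inverse of `h`;
hence `g` is a unit. Joining two such paths by a connecting path labelled `(1, y)` shows that
`g` only depends on `w̄Q` and is multiplicative, and a path labelled `(1, w)` between terminal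
states forces `w̄ ∈ Q`, which gives injectivity.
-/

theorem exists_injective_hom_units_of_rel {G M : Type*} [Group G] [Monoid M]
    (R : G → M → Prop)
    (functional : ∀ {x g g'}, R x g → R x g' → g = g')
    (mul : ∀ {x y g h}, R x g → R y h → R (x * y) (g * h))
    (inv : ∀ {x g}, R x g → ∃ h, R x⁻¹ h)
    (one : R 1 1)
    (isUnit : ∀ {x g}, R x g → IsUnit g)
    (eq_one : ∀ {x}, R x 1 → x = 1) :
    ∃ K : Subgroup G, (K : Set G) = {x | ∃ g, R x g} ∧
      ∃ σ : K →* Mˣ, Function.Injective σ ∧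
        ∀ x g, R x g → ∃ hx : x ∈ K, (σ ⟨x, hx⟩ : M) = g := by
  let K : Subgroup G :=
    { carrier := {x | ∃ g, R x g}
      mul_mem' := fun ⟨g, hg⟩ ⟨h, hh⟩ => ⟨g * h, mul hg hh⟩
      one_mem' := ⟨1, one⟩
      inv_mem' := fun ⟨_, hg⟩ => inv hg }
  choose label hlabel using fun x : K => x.2
  let σ : K →* Mˣ := MonoidHom.mk' (fun x => (isUnit (hlabel x)).unit) fun x y =>
    Units.ext (functional (hlabel (x * y)) (mul (hlabel x) (hlabel y)))
  refine ⟨K, rfl, σ, (injective_iff_map_eq_one σ).2 fun x hx => Subtype.ext (eq_one ?_),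
    fun x g hg => ⟨⟨g, hg⟩, functional (hlabel _) hg⟩⟩
  have hx1 : label x = 1 := congrArg Units.val hx
  exact hx1 ▸ hlabel x

namespace DetMAutomaton

variable {M : Type} [Monoid M] {X : Type} {A : DetMAutomaton M X}

theorem Path.unique {p q q' : A.State} {m m' : M} {w : List X}
    (h : A.Path p m w q) (h' : A.Path p m' w q') : m = m' ∧ q = q' := by
  induction h generalizing m' q' with
  | nil => cases h'; exact ⟨rfl, rfl⟩
  | cons e _ ih =>
    cases h' with
    | cons e' h' =>
      obtain ⟨rfl, rfl⟩ := A.det e e'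
      obtain ⟨rfl, rfl⟩ := ih h'
      exact ⟨rfl, rfl⟩

theorem Path.append {p q r : A.State} {m n : M} {w w' : List X}
    (h : A.Path p m w q) (h' : A.Path q n w' r) : A.Path p (m * n) (w ++ w') r := by
  induction h with
  | nil => simpa using h'
  | cons e _ ih => simpa [mul_assoc] using Path.cons e (ih h')

theorem Path.exists_of_append {p r : A.State} {m : M} {w w' : List X}
    (h : A.Path p m (w ++ w') r) :
    ∃ q n n', A.Path p n w q ∧ A.Path q n' w' r ∧ m = n * n' := by
  induction w generalizing p m with
  | nil => exact ⟨p, 1, m, .nil p, h, (one_mul m).symm⟩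
  | cons x w ih =>
    cases h with
    | cons e h =>
      obtain ⟨q, n, n', hn, hn', rfl⟩ := ih h
      exact ⟨q, _, n', .cons e hn, hn', (mul_assoc _ _ _).symm⟩

def withInitTerminal (A : DetMAutomaton M X) (i : A.State) (T : Set A.State) :
    DetMAutomaton M X :=
  { A with init := i, terminal := T }

theorem path_withInitTerminal {i : A.State} {T : Set A.State} {p q : A.State} {m : M}
    {w : List X} : (A.withInitTerminal i T).Path p m w q ↔ A.Path p m w q :=
  ⟨Path.rec (A := A.withInitTerminal i T) (motive := fun p m w q _ => A.Path p m w q)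
      (Path.nil (A := A)) (fun e _ ih => Path.cons (A := A) e ih),
    Path.rec (A := A) (motive := fun p m w q _ => (A.withInitTerminal i T).Path p m w q)
      (Path.nil (A := A.withInitTerminal i T))
      (fun e _ ih => Path.cons (A := A.withInitTerminal i T) e ih)⟩

theorem lang_withInitTerminal (i : A.State) (T : Set A.State) :
    (A.withInitTerminal i T).Lang = {w | ∃ q ∈ T, A.Path i 1 w q} := by
  ext w
  exact exists_congr fun q => and_congr Iff.rfl path_withInitTerminal

theorem DTSM.exists_path_of_mem_terminal (hmin : A.DTSM) {t : A.State}
    (ht : t ∈ A.terminal) : ∃ w, A.Path A.init 1 w t := by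
  have := A.stateFintype
  let T := {q ∈ A.terminal | ∃ w, A.Path A.init 1 w q}
  have hlang : (A.withInitTerminal A.init T).Lang = A.Lang := by
    rw [lang_withInitTerminal]
    ext w
    exact ⟨fun ⟨q, hq, hw⟩ => ⟨q, hq.1, hw⟩, fun ⟨q, hq, hw⟩ => ⟨q, ⟨hq, w, hw⟩, hw⟩⟩
  have hcard : Nat.card A.terminal ≤ Nat.card T := hmin _ hlang
  have hT : T = A.terminal := Set.eq_of_subset_of_ncard_le (fun _ hq => hq.1)
    (by simpa only [Nat.card_coe_set_eq] using hcard) (Set.toFinite _)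
  exact (hT.symm ▸ ht : t ∈ T).2

theorem DTSM.withInitTerminal (hmin : A.DTSM) {i : A.State}
    (hlang : (A.withInitTerminal i A.terminal).Lang = A.Lang) :
    (A.withInitTerminal i A.terminal).DTSM :=
  fun B hB => hmin B (hB.trans hlang)

section Subgroup

variable {F : Type} [Group F] {ι : X → F} {Q : Subgroup F}

theorem init_mem_terminal (hacc : A.Lang = {w | (w.map ι).prod ∈ Q}) :
    A.init ∈ A.terminal := by
  have h : [] ∈ A.Lang := by simp [hacc, Q.one_mem]
  obtain ⟨q, hq, hpath⟩ := h
  exact (hpath.unique (.nil _)).2 ▸ hq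

theorem lang_withInitTerminal_of_path (hacc : A.Lang = {w | (w.map ι).prod ∈ Q})
    {u : List X} {s : A.State} (hu : (u.map ι).prod ∈ Q) (hs : A.Path A.init 1 u s) :
    (A.withInitTerminal s A.terminal).Lang = A.Lang := by
  rw [lang_withInitTerminal, hacc]
  ext w
  have huw : u ++ w ∈ A.Lang ↔ (w.map ι).prod ∈ Q := by
    simpa [hacc] using Q.mul_mem_cancel_left hu
  refine ⟨fun ⟨t, ht, hw⟩ => huw.1 ⟨t, ht, by simpa using hs.append hw⟩, fun hw => ?_⟩
  obtain ⟨t, ht, hpath⟩ := huw.2 hw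
  obtain ⟨s', n, n', hn, hn', hm⟩ := hpath.exists_of_append
  obtain ⟨rfl, rfl⟩ := hs.unique hn
  obtain rfl : n' = 1 := by simpa using hm.symm
  exact ⟨t, ht, hn'⟩

theorem lang_withInitTerminal_of_mem_terminal (hacc : A.Lang = {w | (w.map ι).prod ∈ Q})
    (hmin : A.DTSM) {s : A.State} (hs : s ∈ A.terminal) :
    (A.withInitTerminal s A.terminal).Lang = A.Lang := by
  obtain ⟨u, hu⟩ := hmin.exists_path_of_mem_terminal hs
  have hu' : u ∈ A.Lang := ⟨s, hs, hu⟩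
  rw [hacc] at hu'
  exact lang_withInitTerminal_of_path hacc hu' hu

theorem path_from_terminal_iff (hacc : A.Lang = {w | (w.map ι).prod ∈ Q}) (hmin : A.DTSM)
    {s : A.State} (hs : s ∈ A.terminal) (w : List X) :
    (∃ t ∈ A.terminal, A.Path s 1 w t) ↔ (w.map ι).prod ∈ Q := by
  have h := Set.ext_iff.1 (lang_withInitTerminal_of_mem_terminal hacc hmin hs) w
  rwa [lang_withInitTerminal, hacc] at h

theorem exists_path_of_mem_terminal (hacc : A.Lang = {w | (w.map ι).prod ∈ Q})
    (hmin : A.DTSM) {s t : A.State} (hs : s ∈ A.terminal) (ht : t ∈ A.terminal) :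
    ∃ y, (y.map ι).prod ∈ Q ∧ A.Path s 1 y t := by
  have hlang := lang_withInitTerminal_of_mem_terminal hacc hmin hs
  obtain ⟨y, hy⟩ := (hmin.withInitTerminal hlang).exists_path_of_mem_terminal ht
  have hy := path_withInitTerminal.1 hy
  exact ⟨y, (path_from_terminal_iff hacc hmin hs y).1 ⟨t, ht, hy⟩, hy⟩

theorem label_eq_one_of_mem (hacc : A.Lang = {w | (w.map ι).prod ∈ Q}) (hmin : A.DTSM)
    {p r : A.State} {g : M} {w : List X} (hp : p ∈ A.terminal) (hpath : A.Path p g w r)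
    (hw : (w.map ι).prod ∈ Q) : g = 1 := by
  obtain ⟨t, -, ht⟩ := (path_from_terminal_iff hacc hmin hp w).2 hw
  exact (hpath.unique ht).1

theorem exists_right_inverse_label (hacc : A.Lang = {w | (w.map ι).prod ∈ Q})
    (hmin : A.DTSM) {p r : A.State} {g : M} {w v : List X} (hp : p ∈ A.terminal)
    (hpath : A.Path p g w r) (hwv : ((w ++ v).map ι).prod ∈ Q) :
    ∃ h, ∃ e ∈ A.terminal, A.Path r h v e ∧ g * h = 1 := by
  obtain ⟨e, he, hpe⟩ := (path_from_terminal_iff hacc hmin hp _).2 hwv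
  obtain ⟨r', n, h, hn, hh, hgh⟩ := hpe.exists_of_append
  obtain ⟨rfl, rfl⟩ := hpath.unique hn
  exact ⟨h, e, he, hh, hgh.symm⟩

theorem isUnit_label (hacc : A.Lang = {w | (w.map ι).prod ∈ Q}) (hmin : A.DTSM)
    (hgen : ∀ f : F, ∃ w : List X, (w.map ι).prod = f) {p r : A.State} {g : M} {w : List X}
    (hp : p ∈ A.terminal) (hr : r ∈ A.terminal) (hpath : A.Path p g w r) : IsUnit g := by
  obtain ⟨v, hv⟩ := hgen ((w.map ι).prod)⁻¹
  obtain ⟨h, e, -, hh, hgh⟩ := exists_right_inverse_label hacc hmin hp hpath (v := v)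
    (by simp [hv, Q.one_mem])
  obtain ⟨k, -, -, -, hhk⟩ := exists_right_inverse_label hacc hmin hr hh (v := w)
    (by simp [hv, Q.one_mem])
  have hgk : g = k := left_inv_eq_right_inv hgh hhk
  exact ⟨⟨g, h, hgh, hgk ▸ hhk⟩, rfl⟩

def LabelsClass (A : DetMAutomaton M X) (ι : X → F) (Q : Subgroup F) (x : F ⧸ Q) (g : M) :
    Prop :=
  ∃ w : List X, (∃ p ∈ A.terminal, ∃ r ∈ A.terminal, A.Path p g w r) ∧
    (QuotientGroup.mk ((w.map ι).prod) : F ⧸ Q) = x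

theorem LabelsClass.isUnit (hacc : A.Lang = {w | (w.map ι).prod ∈ Q}) (hmin : A.DTSM)
    (hgen : ∀ f : F, ∃ w : List X, (w.map ι).prod = f) {x : F ⧸ Q} {g : M}
    (hg : A.LabelsClass ι Q x g) : IsUnit g := by
  obtain ⟨w, ⟨p, hp, r, hr, hpath⟩, -⟩ := hg
  exact isUnit_label hacc hmin hgen hp hr hpath

variable [Q.Normal]

theorem label_eq_of_mk_eq (hacc : A.Lang = {w | (w.map ι).prod ∈ Q})
    (hmin : A.DTSM) (hgen : ∀ f : F, ∃ w : List X, (w.map ι).prod = f)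
    {p r p' r' : A.State} {g g' : M} {w w' : List X}
    (hp : p ∈ A.terminal) (hr : r ∈ A.terminal) (hp' : p' ∈ A.terminal)
    (hr' : r' ∈ A.terminal) (hpath : A.Path p g w r) (hpath' : A.Path p' g' w' r')
    (hw : (QuotientGroup.mk ((w.map ι).prod) : F ⧸ Q) = QuotientGroup.mk ((w'.map ι).prod)) :
    g = g' := by
  obtain ⟨v, hv⟩ := hgen ((w'.map ι).prod)⁻¹
  obtain ⟨h, e, he, hh, hg'h⟩ := exists_right_inverse_label hacc hmin hp' hpath' (v := v)
    (by simp [hv, Q.one_mem])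
  obtain ⟨y, hy, hry⟩ := exists_path_of_mem_terminal hacc hmin hr hr'
  -- `w y v` represents `w̄ ȳ w̄'⁻¹ ∈ Q`, and is read from `p` through `r`, `r'` to `e`
  have hwyv : ((w ++ (y ++ v)).map ι).prod ∈ Q := by
    rw [← QuotientGroup.eq_one_iff]
    simp [hv, hw, (QuotientGroup.eq_one_iff _).2 hy]
  have hgh : g * (1 * h) = 1 :=
    label_eq_one_of_mem hacc hmin hp (hpath.append (hry.append hh)) hwyv
  rw [one_mul] at hgh
  exact (isUnit_label hacc hmin hgen hr' he hh).mul_left_inj.1 (hgh.trans hg'h.symm)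

theorem labelsClass_one (hacc : A.Lang = {w | (w.map ι).prod ∈ Q}) : A.LabelsClass ι Q 1 1 :=
  ⟨[], ⟨A.init, init_mem_terminal hacc, A.init, init_mem_terminal hacc, .nil _⟩, by simp⟩

theorem LabelsClass.mul (hacc : A.Lang = {w | (w.map ι).prod ∈ Q}) (hmin : A.DTSM)
    {x y : F ⧸ Q} {g h : M} (hx : A.LabelsClass ι Q x g) (hy : A.LabelsClass ι Q y h) :
    A.LabelsClass ι Q (x * y) (g * h) := by
  obtain ⟨w, ⟨p, hp, r, hr, hpath⟩, rfl⟩ := hx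
  obtain ⟨w', ⟨p', hp', r', hr', hpath'⟩, rfl⟩ := hy
  obtain ⟨u, hu, hru⟩ := exists_path_of_mem_terminal hacc hmin hr hp'
  refine ⟨w ++ (u ++ w'), ⟨p, hp, r', hr', by simpa using hpath.append (hru.append hpath')⟩, ?_⟩
  simp [(QuotientGroup.eq_one_iff _).2 hu]

theorem LabelsClass.exists_inv (hacc : A.Lang = {w | (w.map ι).prod ∈ Q}) (hmin : A.DTSM)
    (hgen : ∀ f : F, ∃ w : List X, (w.map ι).prod = f) {x : F ⧸ Q} {g : M}
    (hx : A.LabelsClass ι Q x g) : ∃ h, A.LabelsClass ι Q x⁻¹ h := by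
  obtain ⟨w, ⟨p, hp, r, hr, hpath⟩, rfl⟩ := hx
  obtain ⟨v, hv⟩ := hgen ((w.map ι).prod)⁻¹
  obtain ⟨h, e, he, hh, -⟩ := exists_right_inverse_label hacc hmin hp hpath (v := v)
    (by simp [hv, Q.one_mem])
  exact ⟨h, v, ⟨r, hr, e, he, hh⟩, by simp [hv]⟩

theorem LabelsClass.unique (hacc : A.Lang = {w | (w.map ι).prod ∈ Q}) (hmin : A.DTSM)
    (hgen : ∀ f : F, ∃ w : List X, (w.map ι).prod = f) {x : F ⧸ Q} {g g' : M}
    (hg : A.LabelsClass ι Q x g) (hg' : A.LabelsClass ι Q x g') : g = g' := by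
  obtain ⟨w, ⟨p, hp, r, hr, hpath⟩, rfl⟩ := hg
  obtain ⟨w', ⟨p', hp', r', hr', hpath'⟩, hw⟩ := hg'
  exact label_eq_of_mk_eq hacc hmin hgen hp hr hp' hr' hpath hpath' hw.symm

theorem LabelsClass.eq_one (hacc : A.Lang = {w | (w.map ι).prod ∈ Q}) (hmin : A.DTSM)
    {x : F ⧸ Q} (hx : A.LabelsClass ι Q x 1) : x = 1 := by
  obtain ⟨w, ⟨p, hp, r, hr, hpath⟩, rfl⟩ := hx
  exact (QuotientGroup.eq_one_iff _).2 ((path_from_terminal_iff hacc hmin hp w).1 ⟨r, hr, hpath⟩)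

end Subgroup

end DetMAutomaton

theorem DetMAutomaton.embedding_into_units_general
    {M : Type} [Monoid M]
    {F : Type} [Group F]
    {X : Type} (ι : X → F)
    (hgen : ∀ f : F, ∃ w : List X, (w.map ι).prod = f)
    (Q : Subgroup F) [Q.Normal] (A : DetMAutomaton M X)
    (hacc : A.Lang = {w : List X | (w.map ι).prod ∈ Q}) (hmin : A.DTSM) :
    ∃ K : Subgroup (F ⧸ Q),
      (K : Set (F ⧸ Q)) =
        {x : F ⧸ Q | ∃ w : List X,
          (∃ m : M, ∃ p ∈ A.terminal, ∃ r ∈ A.terminal, A.Path p m w r) ∧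
          (QuotientGroup.mk ((w.map ι).prod) : F ⧸ Q) = x} ∧
      ∃ σ : K →* Mˣ, Function.Injective σ ∧
        ∀ (w : List X) (g : M),
          (∃ p ∈ A.terminal, ∃ r ∈ A.terminal, A.Path p g w r) →
          ∃ hmem : (QuotientGroup.mk ((w.map ι).prod) : F ⧸ Q) ∈ K,
            ((σ ⟨QuotientGroup.mk ((w.map ι).prod), hmem⟩ : Mˣ) : M) = g := by
  obtain ⟨K, hK, σ, hσ, hσK⟩ := exists_injective_hom_units_of_rel (A.LabelsClass ι Q)
    (LabelsClass.unique hacc hmin hgen) (LabelsClass.mul hacc hmin)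
    (LabelsClass.exists_inv hacc hmin hgen) (labelsClass_one hacc)
    (LabelsClass.isUnit hacc hmin hgen) (LabelsClass.eq_one hacc hmin)
  refine ⟨K, hK.trans ?_, σ, hσ, fun w g hg => hσK _ g ⟨w, hg, rfl⟩⟩
  ext x
  exact ⟨fun ⟨g, w, hg, hx⟩ => ⟨w, ⟨g, hg⟩, hx⟩, fun ⟨w, ⟨g, hg⟩, hx⟩ => ⟨g, w, hg, hx⟩⟩

/-- **Lemma 8.** Suppose `M` has unique left inverses and `A` is a DTSM deterministic
`M`-automaton accepting the normal subgroup `Q` of the free group `F` (generated as a monoid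
by `X`). Let `K = { w̄Q : w ∈ J }` where `J` is the set of words read along paths between
terminal states. Then `K` is a subgroup of `F/Q` and there is a well-defined injective group
homomorphism `σ : K → G(M)` sending `w̄Q` to the unique `g ∈ M` such that `(g, w)` labels a
path between terminal states. -/
theorem DetMAutomaton.embedding_into_units
    {M : Type} [Monoid M] (hM : UniqueLeftInverses M)
    {F : Type} [Group F] [IsFreeGroup F]
    {X : Type} [Fintype X] (ι : X → F)
    (hgen : ∀ f : F, ∃ w : List X, (w.map ι).prod = f)
    (Q : Subgroup F) [Q.Normal] (A : DetMAutomaton M X)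
    (hacc : A.Lang = {w : List X | (w.map ι).prod ∈ Q}) (hmin : A.DTSM) :
    ∃ K : Subgroup (F ⧸ Q),
      (K : Set (F ⧸ Q)) =
        {x : F ⧸ Q | ∃ w : List X,
          (∃ m : M, ∃ p ∈ A.terminal, ∃ r ∈ A.terminal, A.Path p m w r) ∧
          (QuotientGroup.mk ((w.map ι).prod) : F ⧸ Q) = x} ∧
      ∃ σ : K →* Mˣ, Function.Injective σ ∧
        ∀ (w : List X) (g : M),
          (∃ p ∈ A.terminal, ∃ r ∈ A.terminal, A.Path p g w r) →
          ∃ hmem : (QuotientGroup.mk ((w.map ι).prod) : F ⧸ Q) ∈ K,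
            ((σ ⟨QuotientGroup.mk ((w.map ι).prod), hmem⟩ : Mˣ) : M) = g :=
  DetMAutomaton.embedding_into_units_general ι hgen Q A hacc hmin
end

section
/- Let M be a monoid with unique left inverses whose group of units G(M) is finite, and let H be a group generated as a monoid by a finite set X. If the word problem of H with respect to X is accepted by a deterministic M-automaton over X, then H is finite. -/
namespace DetMAutomaton

variable {M : Type} [Monoid M] {X : Type}

lemma path_split {A : DetMAutomaton M X} {p r : A.State} {m : M} {w v : List X}
    (h : A.Path p m (w ++ v) r) :
    ∃ (m₁ m₂ : M) (q : A.State), m = m₁ * m₂ ∧ A.Path p m₁ w q ∧ A.Path q m₂ v r := by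
  induction w generalizing p m with
  | nil =>
      exact ⟨1, m, p, (one_mul m).symm, DetMAutomaton.Path.nil p, h⟩
  | cons x w ih =>
      cases h with
      | @cons _ q₀ _ g h' _ _ e hp =>
          obtain ⟨m₁, m₂, q, hm, h1, h2⟩ := ih hp
          exact ⟨g * m₁, m₂, q, by rw [hm, mul_assoc], DetMAutomaton.Path.cons e h1, h2⟩

lemma path_unique {A : DetMAutomaton M X} {p q q' : A.State} {m m' : M} {w : List X}
    (h1 : A.Path p m w q) (h2 : A.Path p m' w q') : m = m' ∧ q = q' := by
  induction w generalizing p m m' with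
  | nil =>
      cases h1; cases h2; exact ⟨rfl, rfl⟩
  | cons x w ih =>
      cases h1 with
      | @cons _ s _ g h _ _ e1 hp1 =>
        cases h2 with
        | @cons _ s' _ g' h'' _ _ e2 hp2 =>
          obtain ⟨hg, hs⟩ := A.det e1 e2
          subst hg; subst hs
          obtain ⟨hm, hq⟩ := ih hp1 hp2
          exact ⟨by rw [hm], hq⟩

open Classical in
/-- The (unique, if it exists) state reached from `p` by reading the word `u`. -/
noncomputable def next (A : DetMAutomaton M X) (u : List X) (p : A.State) :
    Option A.State :=
  if h : ∃ q : A.State, ∃ m : M, A.Path p m u q then some h.choose else none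

lemma next_eq_some {A : DetMAutomaton M X} {u : List X} {p : A.State} {m : M}
    {q : A.State} (hp : A.Path p m u q) : A.next u p = some q := by
  have h : ∃ q : A.State, ∃ m : M, A.Path p m u q := ⟨q, m, hp⟩
  simp only [DetMAutomaton.next, dif_pos h]
  obtain ⟨m', hm'⟩ := h.choose_spec
  exact congrArg some (path_unique hm' hp).2

end DetMAutomaton

/-- If `M` is a monoid with unique left inverses whose group of units is finite, then no
deterministic `M`-automaton accepts the word problem of an infinite finitely generated
group. -/
theorem finite_of_wordProblem_detMAutomaton_finite_units
    {M : Type} [Monoid M] (hM : UniqueLeftInverses M) (hU : Finite Mˣ)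
    {H : Type} [Group H] {X : Type} [Fintype X] (φ : X → H)
    (hgen : ∀ h : H, ∃ w : List X, (w.map φ).prod = h)
    (A : DetMAutomaton M X) (hacc : A.Lang = wordProblem φ) :
    Finite H := by
  classical
  haveI := hU
  haveI := A.stateFintype
  -- representatives of group elements
  choose rep hrep using hgen
  -- membership in the language
  have hLang : ∀ w : List X,
      (∃ q ∈ A.terminal, A.Path A.init 1 w q) ↔ (w.map φ).prod = 1 := by
    intro w
    exact Set.ext_iff.mp hacc w
  -- every word labels a (unique) path from the initial state
  have exPath : ∀ w : List X, ∃ (m : M) (q : A.State), A.Path A.init m w q := by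
    intro w
    have hb : (((w ++ rep ((w.map φ).prod)⁻¹).map φ).prod) = 1 := by
      rw [List.map_append, List.prod_append, hrep, mul_inv_cancel]
    obtain ⟨q, hq, hp⟩ := (hLang _).mpr hb
    obtain ⟨m₁, m₂, q', _, h1, _⟩ := DetMAutomaton.path_split hp
    exact ⟨m₁, q', h1⟩
  choose lam del hpath using exPath
  have huniq : ∀ {w : List X} {m : M} {q : A.State},
      A.Path A.init m w q → lam w = m ∧ del w = q :=
    fun hp => DetMAutomaton.path_unique (hpath _) hp
  -- words representing 1 have trivial label and end in a terminal state
  have hone : ∀ w : List X, (w.map φ).prod = 1 → lam w = 1 ∧ del w ∈ A.terminal := by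
    intro w hw
    obtain ⟨q, hq, hp⟩ := (hLang w).mpr hw
    obtain ⟨h1, h2⟩ := huniq hp
    exact ⟨h1, h2 ▸ hq⟩
  have hrec : ∀ w : List X, lam w = 1 → del w ∈ A.terminal → (w.map φ).prod = 1 := by
    intro w h1 h2
    exact (hLang w).mp ⟨del w, h2, h1 ▸ hpath w⟩
  -- splitting a path at an intermediate point
  have hsplit : ∀ Z u : List X, ∃ n : M,
      A.Path (del Z) n u (del (Z ++ u)) ∧ lam (Z ++ u) = lam Z * n := by
    intro Z u
    obtain ⟨m₁, m₂, q, hm, h1, h2⟩ := DetMAutomaton.path_split (hpath (Z ++ u))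
    obtain ⟨e1, e2⟩ := DetMAutomaton.path_unique (hpath Z) h1
    refine ⟨m₂, ?_, ?_⟩
    · rw [e2]; exact h2
    · rw [hm, e1]
  -- reading the same word from the same state gives the same label and end state
  have htrans : ∀ Z Z' u : List X, del Z = del Z' →
      del (Z ++ u) = del (Z' ++ u) ∧
      ∃ n : M, lam (Z ++ u) = lam Z * n ∧ lam (Z' ++ u) = lam Z' * n := by
    intro Z Z' u hZ
    obtain ⟨n, hp1, hl1⟩ := hsplit Z u
    obtain ⟨n', hp2, hl2⟩ := hsplit Z' u
    rw [← hZ] at hp2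
    obtain ⟨hn, hq⟩ := DetMAutomaton.path_unique hp1 hp2
    refine ⟨hq, n, hl1, ?_⟩
    rw [hl2, hn]
  have hstep : ∀ u Z : List X, A.next u (del Z) = some (del (Z ++ u)) := by
    intro u Z
    obtain ⟨n, hp, _⟩ := hsplit Z u
    exact DetMAutomaton.next_eq_some hp
  -- the finite data associated to a group element
  let Θ : H → (A.State → Option A.State) × (A.State → Option A.State) :=
    fun h => (A.next (rep h), A.next (rep (h⁻¹)))
  have hΘ : ∀ (x y : H), Θ x = Θ y → ∀ Z : List X,
      del (Z ++ rep x) = del (Z ++ rep y) ∧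
      del (Z ++ rep (x⁻¹)) = del (Z ++ rep (y⁻¹)) := by
    intro x y hxy Z
    have h1 : A.next (rep x) (del Z) = A.next (rep y) (del Z) :=
      congrFun (congrArg Prod.fst hxy) (del Z)
    have h2 : A.next (rep (x⁻¹)) (del Z) = A.next (rep (y⁻¹)) (del Z) :=
      congrFun (congrArg Prod.snd hxy) (del Z)
    rw [hstep (rep x) Z, hstep (rep y) Z] at h1
    rw [hstep (rep (x⁻¹)) Z, hstep (rep (y⁻¹)) Z] at h2
    exact ⟨Option.some.inj h1, Option.some.inj h2⟩
  -- each fiber of Θ is finite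
  have fiber_fin : ∀ g : H, {x : H | Θ x = Θ g}.Finite := by
    intro g
    let WL : ℕ → List X := fun k => (List.replicate k (rep g ++ rep (g⁻¹))).flatten
    have hWL0 : WL 0 = [] := rfl
    have hWLs : ∀ k : ℕ, WL (k + 1) = WL k ++ (rep g ++ rep (g⁻¹)) := by
      intro k
      show (List.replicate (k + 1) (rep g ++ rep (g⁻¹))).flatten =
        (List.replicate k (rep g ++ rep (g⁻¹))).flatten ++ (rep g ++ rep (g⁻¹))
      rw [List.replicate_succ', List.flatten_append]
      simp
    have hbarWL : ∀ k : ℕ, ((WL k).map φ).prod = 1 := by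
      intro k
      induction k with
      | zero => rw [hWL0]; simp
      | succ n ih =>
          rw [hWLs n, List.map_append, List.prod_append, ih, one_mul,
            List.map_append, List.prod_append, hrep, hrep, mul_inv_cancel]
    -- pigeonhole
    obtain ⟨a, b, hab, hTeq⟩ : ∃ a b : ℕ, a < b ∧ del (WL a) = del (WL b) := by
      obtain ⟨a, b, hne, he⟩ :=
        Finite.exists_ne_map_eq_of_infinite (fun k : ℕ => del (WL k))
      rcases hne.lt_or_gt with h | h
      · exact ⟨a, b, h, he⟩
      · exact ⟨b, a, h, he.symm⟩
    -- a "block" moves the state one step along the WL-trajectory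
    have hblock : ∀ x y : H, Θ x = Θ g → Θ y = Θ g →
        ∀ (Z : List X) (k : ℕ), del Z = del (WL k) →
        del (Z ++ (rep x ++ rep (y⁻¹))) = del (WL (k + 1)) := by
      intro x y hx hy Z k hZ
      have e1 : del (Z ++ rep x) = del (Z ++ rep g) := (hΘ x g hx Z).1
      have e3 : del (Z ++ rep g) = del (WL k ++ rep g) := (htrans Z (WL k) (rep g) hZ).1
      have e2 : del ((Z ++ rep x) ++ rep (y⁻¹)) = del ((Z ++ rep x) ++ rep (g⁻¹)) :=
        (hΘ y g hy (Z ++ rep x)).2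
      have e4 : del ((Z ++ rep x) ++ rep (g⁻¹)) = del ((WL k ++ rep g) ++ rep (g⁻¹)) :=
        (htrans (Z ++ rep x) (WL k ++ rep g) (rep (g⁻¹)) (e1.trans e3)).1
      have e5 : del (Z ++ (rep x ++ rep (y⁻¹))) = del ((Z ++ rep x) ++ rep (y⁻¹)) := by
        rw [List.append_assoc]
      rw [e5, e2, e4, List.append_assoc, ← hWLs k]
    have hWLstep : ∀ (n : ℕ) (Z : List X) (k : ℕ), del Z = del (WL k) →
        del (Z ++ WL n) = del (WL (k + n)) := by
      intro n
      induction n with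
      | zero =>
          intro Z k hZ
          rw [hWL0, List.append_nil, Nat.add_zero]; exact hZ
      | succ n ih =>
          intro Z k hZ
          have h1 := ih Z k hZ
          have h2 := hblock g g rfl rfl (Z ++ WL n) (k + n) h1
          calc del (Z ++ WL (n + 1)) = del ((Z ++ WL n) ++ (rep g ++ rep (g⁻¹))) := by
                rw [hWLs n, ← List.append_assoc]
            _ = del (WL (k + (n + 1))) := by rw [← Nat.add_assoc]; exact h2
    -- the loop words
    let D : H → H → List X := fun x y => (rep x ++ rep (y⁻¹)) ++ WL (b - a - 1)
    have hbarD : ∀ x y : H, (((D x y).map φ).prod) = x * y⁻¹ := by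
      intro x y
      show ((((rep x ++ rep (y⁻¹)) ++ WL (b - a - 1)).map φ).prod) = x * y⁻¹
      rw [List.map_append, List.prod_append, List.map_append, List.prod_append,
        hrep, hrep, hbarWL, mul_one]
    have hD : ∀ x y : H, Θ x = Θ g → Θ y = Θ g → ∀ Z : List X, del Z = del (WL a) →
        del (Z ++ D x y) = del (WL a) := by
      intro x y hx hy Z hZ
      have h1 := hblock x y hx hy Z a hZ
      have h2 := hWLstep (b - a - 1) _ _ h1
      have h3 : a + 1 + (b - a - 1) = b := by omega
      rw [h3] at h2
      show del (Z ++ ((rep x ++ rep (y⁻¹)) ++ WL (b - a - 1))) = del (WL a)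
      rw [← List.append_assoc, h2, ← hTeq]
    have hmul : ∀ (Z u : List X), del Z = del (WL a) →
        lam (Z ++ u) = lam Z * lam (WL a ++ u) ∧ del (Z ++ u) = del (WL a ++ u) := by
      intro Z u hZ
      obtain ⟨hq, n, h1, h2⟩ := htrans Z (WL a) u hZ
      rw [(hone (WL a) (hbarWL a)).1, one_mul] at h2
      rw [← h2] at h1
      exact ⟨h1, hq⟩
    have hinv : ∀ x y : H, Θ x = Θ g → Θ y = Θ g →
        lam (WL a ++ D x y) * lam (WL a ++ D y x) = 1 := by
      intro x y hx hy
      have d1 : del (WL a ++ D x y) = del (WL a) := hD x y hx hy (WL a) rfl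
      have m1 := (hmul (WL a ++ D x y) (D y x) d1).1
      have b1 : (((WL a ++ D x y) ++ D y x).map φ).prod = 1 := by
        rw [List.map_append, List.prod_append, List.map_append, List.prod_append,
          hbarWL, hbarD, hbarD]
        group
      have h1 := (hone _ b1).1
      rw [m1] at h1
      exact h1
    have hinj : ∀ x y : H, Θ x = Θ g → Θ y = Θ g →
        lam (WL a ++ D x g) = lam (WL a ++ D y g) → x = y := by
      intro x y hx hy hl
      have d1 : del (WL a ++ D x g) = del (WL a) := hD x g hx rfl (WL a) rfl
      have d2 : del (WL a ++ D g y) = del (WL a) := hD g y rfl hy (WL a) rfl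
      have m1 := (hmul (WL a ++ D x g) (D g y) d1).1
      have q1 := (hmul (WL a ++ D x g) (D g y) d1).2
      have hv : lam ((WL a ++ D x g) ++ D g y) = 1 := by
        rw [m1, hl]
        exact hinv y g hy rfl
      have hterm : del ((WL a ++ D x g) ++ D g y) ∈ A.terminal := by
        rw [q1, d2]
        exact (hone (WL a) (hbarWL a)).2
      have hb := hrec _ hv hterm
      rw [List.map_append, List.prod_append, List.map_append, List.prod_append,
        hbarWL, hbarD, hbarD] at hb
      have hxy : x * y⁻¹ = 1 := by rw [← hb]; group
      exact mul_inv_eq_one.mp hxy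
    -- inject the fiber into units of M
    have hexu : ∀ z : {x : H // Θ x = Θ g}, ∃ u : Mˣ,
        (u : M) = lam (WL a ++ D z.1 g) := by
      intro z
      exact ⟨⟨lam (WL a ++ D z.1 g), lam (WL a ++ D g z.1),
        hinv z.1 g z.2 rfl, hinv g z.1 rfl z.2⟩, rfl⟩
    choose f hf using hexu
    have hfinj : Function.Injective f := by
      intro z w hzw
      apply Subtype.ext
      apply hinj z.1 w.1 z.2 w.2
      rw [← hf z, ← hf w, hzw]
    have hfin : Finite {x : H // Θ x = Θ g} := Finite.of_injective f hfinj
    exact Set.finite_coe_iff.mp hfin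
  -- conclude: H is a finite union of finite fibers
  have huniv : (Set.univ : Set H).Finite := by
    have hsub : (Set.univ : Set H) ⊆ ⋃ θ ∈ Set.range Θ, Θ ⁻¹' {θ} := by
      intro x _
      simp only [Set.mem_iUnion]
      exact ⟨Θ x, ⟨x, rfl⟩, rfl⟩
    refine Set.Finite.subset (Set.Finite.biUnion (Set.toFinite _) ?_) hsub
    rintro θ ⟨g, rfl⟩
    exact fiber_fin g
  exact Set.finite_univ_iff.mp huniv
end
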